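/- (Correctness of the SEU pruning strategy) Let D be a finite set of sequences with positive per-position utilities, and let i be an item with SEU(i) := Σ_{s ∈ seq(i)} u(s, s) < minutil, where seq(i) is the set of sequences containing i and u(s,s) is the total utility of s. Then every sequence pattern s' that contains item i satisfies u(s') := Σ_{s ∈ D} u(s', s) < minutil, where u(s', s) is the maximum utility over occurrences of s' in s (taken as 0 if s' does not occur in s). -/

import Mathlib

attribute [local instance] Classical.propDecidable

noncomputable section

abbrev Item := ℕ
/-- A sequence: each position carries an item and its (per-position) utility. -/
abbrev Seqc := List (Item × ℚ)

/-- All per-position utilities of `s` are strictly positive. -/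
def PosUtil (s : Seqc) : Prop := ∀ p ∈ s, 0 < p.2

/-- `O` is an occurrence of the pattern `s'` in the sequence `s`:
a strictly increasing list of indices of `s` whose items match `s'` in order. -/
def IsOcc (s' : List Item) (s : Seqc) (O : List ℕ) : Prop :=
  O.Chain' (· < ·) ∧ (∀ j ∈ O, j < s.length) ∧
    O.map (fun j => (s.getD j (0, 0)).1) = s'

/-- The utility of an occurrence: the sum of utilities of `s` at the chosen indices. -/
def occUtil (s : Seqc) (O : List ℕ) : ℚ :=
  (O.map (fun j => (s.getD j (0, 0)).2)).sum

/-- The total utility of a sequence. -/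
def totalUtil (s : Seqc) : ℚ := (s.map Prod.snd).sum

/-- The (finite) set of all occurrences of `s'` in `s`. -/
def Occs (s' : List Item) (s : Seqc) : Finset (List ℕ) :=
  ((List.range s.length).sublists.filter
     (fun O => O.map (fun j => (s.getD j (0, 0)).1) = s')).toFinset

/-- `u(s', s)`: the maximum occurrence utility of `s'` in `s` (0 if no occurrence). -/
def patUtil (s' : List Item) (s : Seqc) : ℚ :=
  (((Occs s' s).image (fun O => occUtil s O)).max).unbotD 0

/-- `u(s')`: the total utility of pattern `s'` in the database `D`. -/
def dbUtil (s' : List Item) (D : List Seqc) : ℚ :=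
  (D.map (patUtil s')).sum

/-- `s'` occurs in `s` (as a subsequence of the item sequence). -/
def Occurs (s' : List Item) (s : Seqc) : Prop := s'.Sublist (s.map Prod.fst)

/-- Support of a pattern in a database. -/
def supp (s' : List Item) (D : List Seqc) : ℕ :=
  (D.filter (fun s => Occurs s' s)).length

/-- Remaining utility of the item at position `k` in `s`. -/
def RU (s : Seqc) (k : ℕ) : ℚ := ((s.drop k).map Prod.snd).sum

/-- Maximum utility of item `i` among positions of `t` (0 if `i` does not occur). -/
def itemMaxUtil (i : Item) (t : Seqc) : ℚ :=
  (((t.filter (fun p => p.1 = i)).map Prod.snd).maximum).unbotD 0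

/-- Reduced remaining utility of the item at position `k` in `s`. -/
def RRU (s : Seqc) (k : ℕ) : ℚ :=
  (s.getD k (0, 0)).2 +
    ∑ i ∈ ((s.drop (k + 1)).map Prod.fst).toFinset, itemMaxUtil i (s.drop (k + 1))

/-- `p` is an extension position of item `i` for pattern `sp` in sequence `s`. -/
def IsExtPos (sp : List Item) (i : Item) (s : Seqc) (p : ℕ) : Prop :=
  p < s.length ∧ (s.getD p (0, 0)).1 = i ∧
    ∃ O, IsOcc sp s O ∧ ∀ j ∈ O, j < p

/-- Maximum utility of `sp` among its occurrences lying strictly before position `p`. -/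
def patUtilBefore (sp : List Item) (s : Seqc) (p : ℕ) : ℚ :=
  ((((Occs sp s).filter (fun O => ∀ j ∈ O, j < p)).image
      (fun O => occUtil s O)).max).unbotD 0

/-- Per-sequence bound used in RRS: max over extension positions of
`u(sp, s before e_p) + RRU(e_p, s)` (0 if no extension position). -/
def seqRRSBound (sp : List Item) (i : Item) (s : Seqc) : ℚ :=
  ((((Finset.range s.length).filter (IsExtPos sp i s)).image
      (fun p => patUtilBefore sp s p + RRU s p)).max).unbotD 0

/-- Reduced remaining utility of sequence `sp` with extension item `i` in database `D`. -/
def RRS (sp : List Item) (i : Item) (D : List Seqc) : ℚ :=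
  (D.map (seqRRSBound sp i)).sum

/-- `SEU(i)`: sum of the total utilities of all database sequences containing item `i`. -/
def SEU (i : Item) (D : List Seqc) : ℚ :=
  ((D.filter (fun s => i ∈ s.map Prod.fst)).map totalUtil).sum

end
/-!
A pattern containing `i` can only occur in a sequence that contains `i`, and any occurrence picks
out a sub-list of the sequence, so by nonnegativity its utility is at most the sequence's total
utility. Hence `u(s', s) ≤ [i ∈ s] · u(s, s)` for every `s`, and summing over `D` gives
`u(s') ≤ SEU(i)`.
-/

theorem List.map_getD_sublist {α : Type*} {l : List α} {O : List ℕ}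
    (hO : O.Sublist (List.range l.length)) (d : α) : (O.map (l.getD · d)).Sublist l := by
  have hrange : (List.range l.length).map (l.getD · d) = l := by
    refine List.ext_getElem (by simp) fun k hk _ => ?_
    simp [List.getElem?_eq_getElem (by simpa using hk)]
  simpa only [hrange] using hO.map (l.getD · d)

theorem Finset.unbotD_max_image_le {α β : Type*} [LinearOrder β] [DecidableEq β]
    {s : Finset α} {f : α → β} {a b : β} (ha : a ≤ b) (h : ∀ x ∈ s, f x ≤ b) : ((s.image f).max).unbotD a ≤ b := by
  rw [WithBot.unbotD_le_iff fun _ => ha]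
  exact Finset.max_le fun y hy => by
    obtain ⟨x, hx, rfl⟩ := Finset.mem_image.1 hy
    exact WithBot.coe_le_coe.2 (h x hx)

theorem mem_Occs {s' : List Item} {s : Seqc} {O : List ℕ} :
    O ∈ Occs s' s ↔
      O.Sublist (List.range s.length) ∧ O.map (fun j => (s.getD j (0, 0)).1) = s' := by
  simp [Occs]

theorem occurs_of_mem_Occs {s' : List Item} {s : Seqc} {O : List ℕ} (hO : O ∈ Occs s' s) :
    Occurs s' s := by
  obtain ⟨hsub, rfl⟩ := mem_Occs.1 hO
  have h := (List.map_getD_sublist hsub (0, 0)).map Prod.fst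
  rwa [List.map_map] at h

theorem occUtil_le_totalUtil {s : Seqc} (hs : ∀ p ∈ s, 0 ≤ p.2) {O : List ℕ}
    (hO : O.Sublist (List.range s.length)) : occUtil s O ≤ totalUtil s := by
  have hsub := (List.map_getD_sublist hO (0, 0)).map Prod.snd
  rw [List.map_map] at hsub
  exact hsub.sum_le_sum (List.forall_mem_map.2 hs)

theorem totalUtil_nonneg {s : Seqc} (hs : ∀ p ∈ s, 0 ≤ p.2) : 0 ≤ totalUtil s :=
  List.sum_nonneg (List.forall_mem_map.2 hs)

theorem patUtil_le_totalUtil (s' : List Item) {s : Seqc} (hs : ∀ p ∈ s, 0 ≤ p.2) :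
    patUtil s' s ≤ totalUtil s := by
  unfold patUtil
  exact Finset.unbotD_max_image_le (totalUtil_nonneg hs) fun _ hO =>
    occUtil_le_totalUtil hs (mem_Occs.1 hO).1

theorem patUtil_eq_zero_of_not_occurs {s' : List Item} {s : Seqc} (h : ¬Occurs s' s) :
    patUtil s' s = 0 := by
  have hempty : Occs s' s = ∅ :=
    Finset.eq_empty_iff_forall_notMem.2 fun _ hO => h (occurs_of_mem_Occs hO)
  simp [patUtil, hempty]

theorem patUtil_le_ite {s' : List Item} {i : Item} (hi : i ∈ s') {s : Seqc}
    (hs : ∀ p ∈ s, 0 ≤ p.2) :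
    patUtil s' s ≤ if i ∈ s.map Prod.fst then totalUtil s else 0 := by
  split_ifs with h
  · exact patUtil_le_totalUtil s' hs
  · exact (patUtil_eq_zero_of_not_occurs fun hocc => h (hocc.subset hi)).le

theorem dbUtil_le_SEU {s' : List Item} {i : Item} (hi : i ∈ s') {D : List Seqc}
    (hD : ∀ s ∈ D, ∀ p ∈ s, 0 ≤ p.2) : dbUtil s' D ≤ SEU i D :=
  calc dbUtil s' D
      ≤ (D.map fun s => if i ∈ s.map Prod.fst then totalUtil s else 0).sum :=
        List.sum_le_sum fun s hs => patUtil_le_ite hi (hD s hs)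
    _ = SEU i D := by simp [List.sum_map_ite, SEU]

/-- correctness of the SEU pruning strategy: if `SEU(i) < minutil`,
then every pattern containing item `i` has database utility below `minutil`. -/
theorem seu_pruning (D : List Seqc) (i : Item) (minutil : ℚ)
    (hpos : ∀ s ∈ D, PosUtil s)
    (hseu : SEU i D < minutil) :
    ∀ s' : List Item, i ∈ s' → dbUtil s' D < minutil := fun _ hi =>
  (dbUtil_le_SEU hi fun s hs p hp => (hpos s hs p hp).le).trans_lt hseu
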